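/- Let L₀ be a finite co-Heyting algebra and L an extension generated (as a co-Heyting algebra) over L₀ by a primitive tuple (x₁, x₂) with witness g. Then L equals the upper semilattice generated by L₀ ∪ {x₁, x₂}, i.e., every element of L has the form a, a ⊔ x₁, a ⊔ x₂, or a ⊔ x₁ ⊔ x₂ with a ∈ L₀; in particular L is finite. -/

import Mathlib

/-!
Let `A = L₀ ∪ {x₁, x₂}`. The defining properties of a primitive tuple show that `A` is closed
under `⊓` and that `p \ q` is a join of elements of `A` for all `p, q ∈ A`: everything turns on
whether an element `b ∈ L₀` lies above `g` (then `xᵢ ≤ b`) or not (then `b ⊓ g ≤ g⁻`, and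
`g⁻ ⊓ xᵢ ≪ xᵢ` makes `xᵢ \ b = xᵢ`). By distributivity the finite joins of elements of `A`
then form a co-Heyting subalgebra, which must be all of `L`; and every finite join of
elements of `A` is `a`, `a ⊔ x₁`, `a ⊔ x₂` or `a ⊔ x₁ ⊔ x₂` for some `a ∈ L₀`.
-/

/-- `Ll b a` means `b ≪ a`: `a \ b = a` and `b ≤ a`. -/
def Ll {L : Type*} [CoheytingAlgebra L] (b a : L) : Prop := a \ b = a ∧ b ≤ a

/-- `S` is (the underlying set of) a co-Heyting subalgebra. -/
def IsSubalg {L : Type*} [CoheytingAlgebra L] (S : Set L) : Prop :=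
  ⊥ ∈ S ∧ ⊤ ∈ S ∧ ∀ a ∈ S, ∀ b ∈ S, a ⊔ b ∈ S ∧ a ⊓ b ∈ S ∧ a \ b ∈ S

/-- `g` is join irreducible in the subalgebra `S`. -/
def SupIrredIn {L : Type*} [CoheytingAlgebra L] (S : Set L) (g : L) : Prop :=
  g ∈ S ∧ g ≠ ⊥ ∧ ∀ x ∈ S, ∀ y ∈ S, g = x ⊔ y → g = x ∨ g = y

/-- `(x₁, x₂)` is a primitive tuple over the subalgebra `S`, with witness `g`
(join irreducible in `S`) whose predecessor in `S` is `gm` (`g⁻`). -/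
def Primitive {L : Type*} [CoheytingAlgebra L] (S : Set L) (g gm x₁ x₂ : L) : Prop :=
  x₁ ∉ S ∧ x₂ ∉ S ∧ SupIrredIn S g ∧ IsLUB {b | b ∈ S ∧ b < g} gm ∧
  gm ⊓ x₁ ∈ S ∧ gm ⊓ x₂ ∈ S ∧
  ((x₁ = x₂ ∧ Ll (gm ⊓ x₁) x₁ ∧ Ll x₁ g) ∨
   (x₁ ≠ x₂ ∧ x₁ ⊓ x₂ ∈ S ∧ g \ x₁ = x₂ ∧ g \ x₂ = x₁))

/-- `T` is the co-Heyting subalgebra generated by `S ∪ {x₁, x₂}`. -/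
def GeneratesOver {L : Type*} [CoheytingAlgebra L] (S T : Set L) (x₁ x₂ : L) : Prop :=
  IsSubalg T ∧ S ⊆ T ∧ x₁ ∈ T ∧ x₂ ∈ T ∧
  ∀ Tp : Set L, IsSubalg Tp → S ⊆ Tp → x₁ ∈ Tp → x₂ ∈ Tp → T ⊆ Tp

open scoped SetFamily

lemma SupClosed.sups {α : Type*} [SemilatticeSup α] {s t : Set α} (hs : SupClosed s)
    (ht : SupClosed t) : SupClosed (s ⊻ t) := by
  rw [← Set.sups_subset_self, Set.sups_sups_sups_comm]
  exact Set.sups_subset (Set.sups_subset_self.2 hs) (Set.sups_subset_self.2 ht)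

lemma supClosed_pair_bot {α : Type*} [SemilatticeSup α] [OrderBot α] (x : α) :
    SupClosed ({⊥, x} : Set α) := by
  rintro a (rfl | rfl) b (rfl | rfl) <;> simp

lemma exists_eq_of_mem_supClosure_union_pair {α : Type*} [SemilatticeSup α] [OrderBot α]
    {S : Set α} (hS : SupClosed S) (hbot : ⊥ ∈ S) {x₁ x₂ y : α}
    (hy : y ∈ supClosure (S ∪ {x₁, x₂})) :
    ∃ a ∈ S, y = a ∨ y = a ⊔ x₁ ∨ y = a ⊔ x₂ ∨ y = a ⊔ x₁ ⊔ x₂ := by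
  have hsub : supClosure (S ∪ {x₁, x₂}) ⊆ S ⊻ {⊥, x₁} ⊻ {⊥, x₂} := by
    refine supClosure_min ?_ ((hS.sups (supClosed_pair_bot x₁)).sups (supClosed_pair_bot x₂))
    rintro z (hz | rfl | rfl)
    · exact Set.mem_sups.2 ⟨z, Set.mem_sups.2 ⟨z, hz, ⊥, by simp⟩, ⊥, by simp⟩
    · exact Set.mem_sups.2 ⟨z, Set.mem_sups.2 ⟨⊥, hbot, z, by simp⟩, ⊥, by simp⟩
    · exact Set.mem_sups.2 ⟨⊥, Set.mem_sups.2 ⟨⊥, hbot, ⊥, by simp⟩, z, by simp⟩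
  obtain ⟨_, hab, c, hc, rfl⟩ := Set.mem_sups.1 (hsub hy)
  obtain ⟨a, ha, b, hb, rfl⟩ := Set.mem_sups.1 hab
  refine ⟨a, ha, ?_⟩
  rcases hb with rfl | rfl <;> rcases hc with rfl | rfl <;> simp

section IsSubalg

variable {L : Type*} [CoheytingAlgebra L] {S A : Set L} {a b : L}

lemma IsSubalg.bot_mem (hS : IsSubalg S) : ⊥ ∈ S := hS.1

lemma IsSubalg.top_mem (hS : IsSubalg S) : ⊤ ∈ S := hS.2.1

lemma IsSubalg.inf_mem (hS : IsSubalg S) (ha : a ∈ S) (hb : b ∈ S) : a ⊓ b ∈ S :=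
  (hS.2.2 a ha b hb).2.1

lemma IsSubalg.sdiff_mem (hS : IsSubalg S) (ha : a ∈ S) (hb : b ∈ S) : a \ b ∈ S :=
  (hS.2.2 a ha b hb).2.2

lemma IsSubalg.supClosed (hS : IsSubalg S) : SupClosed S :=
  fun a ha b hb => (hS.2.2 a ha b hb).1

lemma sdiff_mem_supClosure_of_forall (hA : ∀ p ∈ A, ∀ q ∈ A, p \ q ∈ supClosure A)
    (ha : a ∈ supClosure A) (hb : b ∈ supClosure A) : a \ b ∈ supClosure A := by
  have hright : supClosure A ⊆ {u | ∀ q ∈ A, u \ q ∈ supClosure A} := by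
    refine supClosure_min hA ?_
    intro u hu v hv q hq
    rw [sup_sdiff]
    exact supClosed_supClosure (hu q hq) (hv q hq)
  have hleft : supClosure A ⊆ {v | ∀ u ∈ supClosure A, u \ v ∈ supClosure A} := by
    refine supClosure_min (fun q hq u hu => hright hu q hq) ?_
    intro v hv w hw u hu
    rw [← sdiff_sdiff_left]
    exact hw _ (hv u hu)
  exact hleft hb a ha

theorem isSubalg_supClosure (hbot : ⊥ ∈ A) (htop : ⊤ ∈ A) (hinf : InfClosed A)
    (hsdiff : ∀ p ∈ A, ∀ q ∈ A, p \ q ∈ supClosure A) : IsSubalg (supClosure A) :=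
  ⟨subset_supClosure hbot, subset_supClosure htop, fun _ ha _ hb =>
    ⟨supClosed_supClosure ha hb, hinf.supClosure ha hb,
      sdiff_mem_supClosure_of_forall hsdiff ha hb⟩⟩

end IsSubalg

section PrimitiveTuple

variable {L : Type*} [CoheytingAlgebra L] {S : Set L} {g gm x₁ x₂ b : L}

lemma SupIrredIn.sdiff_eq_self (hS : IsSubalg S) (hg : SupIrredIn S g) (hb : b ∈ S)
    (hbg : b < g) : g \ b = g := by
  rcases hg.2.2 b hb _ (hS.sdiff_mem hg.1 hb) (sup_sdiff_cancel_right hbg.le).symm with h | h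
  · exact absurd h hbg.ne'
  · exact h.symm

namespace Primitive

lemma symm (h : Primitive S g gm x₁ x₂) : Primitive S g gm x₂ x₁ := by
  obtain ⟨h₁, h₂, hg, hlub, hgm₁, hgm₂, ⟨rfl, hll⟩ | ⟨hne, hinf, hsd₁, hsd₂⟩⟩ := h
  · exact ⟨h₂, h₁, hg, hlub, hgm₂, hgm₁, Or.inl ⟨rfl, hll⟩⟩
  · exact ⟨h₂, h₁, hg, hlub, hgm₂, hgm₁, Or.inr ⟨hne.symm, inf_comm x₁ x₂ ▸ hinf, hsd₂, hsd₁⟩⟩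

lemma witness_mem (h : Primitive S g gm x₁ x₂) : g ∈ S := h.2.2.1.1

lemma eq_or_inf_mem (h : Primitive S g gm x₁ x₂) : x₁ = x₂ ∨ x₁ ⊓ x₂ ∈ S :=
  h.2.2.2.2.2.2.imp (·.1) (·.2.1)

lemma witness_sdiff_eq (h : Primitive S g gm x₁ x₂) : g \ x₁ = g ∨ g \ x₁ = x₂ :=
  h.2.2.2.2.2.2.imp (·.2.2.1) (·.2.2.1)

lemma lt_witness (h : Primitive S g gm x₁ x₂) : x₁ < g := by
  have hne : x₁ ≠ g := fun he => h.1 (he ▸ h.witness_mem)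
  rcases h.2.2.2.2.2.2 with ⟨-, -, hll⟩ | ⟨-, -, -, hsd⟩
  · exact hll.2.lt_of_ne hne
  · exact (hsd ▸ sdiff_le).lt_of_ne hne

lemma sdiff_inf_pred (hS : IsSubalg S) (h : Primitive S g gm x₁ x₂) : x₁ \ (gm ⊓ x₁) = x₁ := by
  have hlt : gm ⊓ x₁ < g := inf_le_right.trans_lt h.lt_witness
  obtain ⟨-, -, hg, -, hgm, -, ⟨-, hll, -⟩ | ⟨-, -, -, hsd⟩⟩ := h
  · exact hll.1
  · calc x₁ \ (gm ⊓ x₁) = (g \ (gm ⊓ x₁)) \ x₂ := by rw [← hsd, sdiff_sdiff_comm]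
      _ = x₁ := by rw [hg.sdiff_eq_self hS hgm hlt, hsd]

lemma inf_le_pred_of_not_le (hS : IsSubalg S) (h : Primitive S g gm x₁ x₂) (hb : b ∈ S)
    (hgb : ¬ g ≤ b) : b ⊓ x₁ ≤ gm := by
  have hbg : b ⊓ g < g := inf_le_right.lt_of_ne fun he => hgb (he ▸ inf_le_left)
  have hle : b ⊓ x₁ ≤ b ⊓ g := inf_le_inf_left b h.lt_witness.le
  obtain ⟨-, -, ⟨hgS, -⟩, hlub, -⟩ := h
  exact hle.trans (hlub.1 ⟨hS.inf_mem hb hgS, hbg⟩)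

lemma inf_mem_of_not_le (hS : IsSubalg S) (h : Primitive S g gm x₁ x₂) (hb : b ∈ S)
    (hgb : ¬ g ≤ b) : b ⊓ x₁ ∈ S := by
  rw [← inf_eq_right.2 (h.inf_le_pred_of_not_le hS hb hgb), inf_left_comm]
  obtain ⟨-, -, -, -, hgm, -⟩ := h
  exact hS.inf_mem hb hgm

lemma sdiff_eq_self_of_not_le (hS : IsSubalg S) (h : Primitive S g gm x₁ x₂) (hb : b ∈ S)
    (hgb : ¬ g ≤ b) : x₁ \ b = x₁ := by
  have hle : x₁ ⊓ b ≤ gm ⊓ x₁ :=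
    le_inf (inf_comm x₁ b ▸ h.inf_le_pred_of_not_le hS hb hgb) inf_le_left
  refine le_antisymm sdiff_le ?_
  calc x₁ = x₁ \ (gm ⊓ x₁) := (h.sdiff_inf_pred hS).symm
    _ ≤ x₁ \ (x₁ ⊓ b) := sdiff_le_sdiff_left hle
    _ = x₁ \ b := sdiff_inf_self_left x₁ b

lemma inf_mem_union (hS : IsSubalg S) (h : Primitive S g gm x₁ x₂) {p : L}
    (hp : p ∈ S ∪ {x₁, x₂}) : p ⊓ x₁ ∈ S ∪ {x₁, x₂} := by
  rcases hp with hp | rfl | rfl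
  · by_cases hgp : g ≤ p
    · rw [inf_eq_right.2 (h.lt_witness.le.trans hgp)]
      exact Or.inr (Or.inl rfl)
    · exact Or.inl (h.inf_mem_of_not_le hS hp hgp)
  · rw [inf_idem]
    exact Or.inr (Or.inl rfl)
  · rcases h.eq_or_inf_mem with rfl | hinf
    · rw [inf_idem]
      exact Or.inr (Or.inl rfl)
    · exact Or.inl (inf_comm x₁ p ▸ hinf)

lemma sdiff_mem_union (hS : IsSubalg S) (h : Primitive S g gm x₁ x₂) {p : L}
    (hp : p ∈ S ∪ {x₁, x₂}) : x₁ \ p ∈ S ∪ {x₁, x₂} := by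
  rcases hp with hp | rfl | rfl
  · by_cases hgp : g ≤ p
    · rw [sdiff_eq_bot_iff.2 (h.lt_witness.le.trans hgp)]
      exact Or.inl hS.bot_mem
    · rw [h.sdiff_eq_self_of_not_le hS hp hgp]
      exact Or.inr (Or.inl rfl)
  · rw [sdiff_self]
    exact Or.inl hS.bot_mem
  · rcases h.eq_or_inf_mem with rfl | hinf
    · rw [sdiff_self]
      exact Or.inl hS.bot_mem
    · have hgp : ¬ g ≤ x₁ ⊓ p := (inf_le_left.trans_lt h.lt_witness).not_ge
      rw [← sdiff_inf_self_left, h.sdiff_eq_self_of_not_le hS hinf hgp]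
      exact Or.inr (Or.inl rfl)

lemma sdiff_mem_supClosure (hS : IsSubalg S) (h : Primitive S g gm x₁ x₂) {c : L} (hc : c ∈ S) :
    c \ x₁ ∈ supClosure (S ∪ {x₁, x₂}) := by
  by_cases hgc : g ≤ c
  · have hdecomp : c \ x₁ = g \ x₁ ⊔ c \ g := by
      conv_lhs => rw [← sup_sdiff_cancel_right hgc]
      rw [sup_sdiff, sdiff_sdiff_left, sup_eq_left.2 h.lt_witness.le]
    have hgx : g \ x₁ ∈ S ∪ {x₁, x₂} := by
      rcases h.witness_sdiff_eq with hgx | hgx <;> rw [hgx]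
      · exact Or.inl h.witness_mem
      · exact Or.inr (Or.inr rfl)
    rw [hdecomp]
    exact sup_mem_supClosure hgx (Or.inl (hS.sdiff_mem hc h.witness_mem))
  · rw [← sdiff_inf_self_left]
    exact subset_supClosure (Or.inl (hS.sdiff_mem hc (h.inf_mem_of_not_le hS hc hgc)))

lemma isSubalg_supClosure_union (hS : IsSubalg S) (h : Primitive S g gm x₁ x₂) :
    IsSubalg (supClosure (S ∪ {x₁, x₂})) := by
  have hswap : S ∪ {x₂, x₁} = S ∪ {x₁, x₂} := by rw [Set.pair_comm]
  have hinf₂ : ∀ {p}, p ∈ S ∪ {x₁, x₂} → p ⊓ x₂ ∈ S ∪ {x₁, x₂} := fun hp =>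
    hswap ▸ h.symm.inf_mem_union hS (hswap ▸ hp)
  have hsdiff₂ : ∀ {p}, p ∈ S ∪ {x₁, x₂} → x₂ \ p ∈ S ∪ {x₁, x₂} := fun hp =>
    hswap ▸ h.symm.sdiff_mem_union hS (hswap ▸ hp)
  have hsdiff₂' : ∀ {c}, c ∈ S → c \ x₂ ∈ supClosure (S ∪ {x₁, x₂}) := fun hc =>
    hswap ▸ h.symm.sdiff_mem_supClosure hS hc
  refine isSubalg_supClosure (Or.inl hS.bot_mem) (Or.inl hS.top_mem) ?_ ?_
  · rintro p hp q (hq | rfl | rfl)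
    · rcases hp with hp | rfl | rfl
      · exact Or.inl (hS.inf_mem hp hq)
      · exact inf_comm q p ▸ h.inf_mem_union hS (Or.inl hq)
      · exact inf_comm q p ▸ hinf₂ (Or.inl hq)
    · exact h.inf_mem_union hS hp
    · exact hinf₂ hp
  · rintro p (hp | rfl | rfl) q hq
    · rcases hq with hq | rfl | rfl
      · exact subset_supClosure (Or.inl (hS.sdiff_mem hp hq))
      · exact h.sdiff_mem_supClosure hS hp
      · exact hsdiff₂' hp
    · exact subset_supClosure (h.sdiff_mem_union hS hq)
    · exact subset_supClosure (hsdiff₂ hq)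

end Primitive

end PrimitiveTuple

theorem primitive_extension_is_sup_semilattice_generated {L : Type*} [CoheytingAlgebra L]
    (S : Set L) (hfin : S.Finite) (hS : IsSubalg S) (g gm x₁ x₂ : L)
    (hp : Primitive S g gm x₁ x₂) (hgen : GeneratesOver S Set.univ x₁ x₂) :
    (∀ y : L, ∃ a ∈ S, y = a ∨ y = a ⊔ x₁ ∨ y = a ⊔ x₂ ∨ y = a ⊔ x₁ ⊔ x₂) ∧ Finite L := by
  have huniv : supClosure (S ∪ {x₁, x₂}) = Set.univ := by
    refine Set.eq_univ_of_univ_subset (hgen.2.2.2.2 _ (hp.isSubalg_supClosure_union hS) ?_ ?_ ?_)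
    · exact Set.subset_union_left.trans subset_supClosure
    · exact subset_supClosure (Or.inr (Or.inl rfl))
    · exact subset_supClosure (Or.inr (Or.inr rfl))
  refine ⟨fun y => ?_, ?_⟩
  · exact exists_eq_of_mem_supClosure_union_pair hS.supClosed hS.bot_mem (huniv ▸ Set.mem_univ y)
  · exact Set.finite_univ_iff.1 (huniv ▸ (hfin.union (Set.toFinite _)).supClosure)
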